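/- arXiv:1705.07105 — 2 statements merged into one kernel-verified Lean document; each statement's English description precedes it below -/
import Mathlib

section
/- Let ⟨T,A⟩ be a DL-Lite_R ontology with a set ABox A, and let ⟨T,A'⟩ be a DL-Lite_R^bag ontology with the same TBox such that the support of A' equals A (i.e., {S(t̄) : A'(S(t̄)) ≥ 1} = A). Then ⟨T,A⟩ is satisfiable under set semantics if and only if ⟨T,A'⟩ is satisfiable under bag semantics. -/
/-!
Common formalization of the bag semantics of DL-Lite ontologies
(Nikolaou et al., "The Bag Semantics of Ontology-Based Data Access").
-/

open scoped Classical

noncomputable section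

/-- Individuals (constants). -/
abbrev Ind : Type := ℕ
/-- Variables. -/
abbrev Var : Type := ℕ
/-- Atomic concepts (unary predicates). -/
abbrev AtomicConcept : Type := ℕ
/-- Atomic roles (binary predicates). -/
abbrev AtomicRole : Type := ℕ

/-- A role is an atomic role or its inverse. -/
inductive Role where
  | atomic : AtomicRole → Role
  | inv : AtomicRole → Role
  deriving DecidableEq

/-- A concept is an atomic concept or `∃R` for a role `R`. -/
inductive DLConcept where
  | atomic : AtomicConcept → DLConcept
  | ex : Role → DLConcept
  deriving DecidableEq

/-- TBox axioms: inclusions and disjointness axioms between concepts or roles. -/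
inductive TBoxAxiom where
  | cIncl : DLConcept → DLConcept → TBoxAxiom
  | rIncl : Role → Role → TBoxAxiom
  | cDisj : DLConcept → DLConcept → TBoxAxiom
  | rDisj : Role → Role → TBoxAxiom
  deriving DecidableEq

/-- A DL-Lite_R TBox: a finite set of TBox axioms. -/
abbrev TBox : Type := Finset TBoxAxiom

/-- A DL-Lite_core TBox: only concept inclusions and concept disjointness axioms. -/
def TBox.IsCore (T : TBox) : Prop :=
  ∀ ax ∈ T, (∃ C D, ax = TBoxAxiom.cIncl C D) ∨ (∃ C D, ax = TBoxAxiom.cDisj C D)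

/-- ABox assertions. -/
inductive Assertion where
  | conceptA : AtomicConcept → Ind → Assertion
  | roleA : AtomicRole → Ind → Ind → Assertion
  deriving DecidableEq

/-- A bag ABox: a finite bag of assertions (represented as a multiset). -/
abbrev BagABox : Type := Multiset Assertion

/-- Multiplicity of an assertion in a bag ABox, as an extended natural. -/
def BagABox.mult (A : BagABox) (s : Assertion) : ℕ∞ := (A.count s : ℕ∞)

/-- Sum of an arbitrary family of extended naturals. -/
def bagSum {α : Type*} (f : α → ℕ∞) : ℕ∞ := ⨆ s : Finset α, ∑ x ∈ s, f x

/-- A bag interpretation. -/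
structure BagInterp : Type 1 where
  Δ : Type
  dne : Nonempty Δ
  indMap : Ind → Δ
  indInj : Function.Injective indMap
  cI : AtomicConcept → Δ → ℕ∞
  rI : AtomicRole → Δ → Δ → ℕ∞

/-- Extension of the interpretation function to roles. -/
def BagInterp.roleMult (I : BagInterp) : Role → I.Δ → I.Δ → ℕ∞
  | Role.atomic P => fun u v => I.rI P u v
  | Role.inv P => fun u v => I.rI P v u

/-- Extension of the interpretation function to concepts. -/
def BagInterp.conceptMult (I : BagInterp) : DLConcept → I.Δ → ℕ∞
  | DLConcept.atomic A => fun u => I.cI A u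
  | DLConcept.ex R => fun u => bagSum (fun v => I.roleMult R u v)

/-- Multiplicity of an assertion in a bag interpretation. -/
def BagInterp.assertMult (I : BagInterp) : Assertion → ℕ∞
  | Assertion.conceptA A a => I.cI A (I.indMap a)
  | Assertion.roleA P a b => I.rI P (I.indMap a) (I.indMap b)

/-- Satisfaction of a TBox axiom by a bag interpretation. -/
def BagInterp.SatisfiesAx (I : BagInterp) : TBoxAxiom → Prop
  | TBoxAxiom.cIncl C D => ∀ u, I.conceptMult C u ≤ I.conceptMult D u
  | TBoxAxiom.rIncl R S => ∀ u v, I.roleMult R u v ≤ I.roleMult S u v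
  | TBoxAxiom.cDisj C D => ∀ u, min (I.conceptMult C u) (I.conceptMult D u) = 0
  | TBoxAxiom.rDisj R S => ∀ u v, min (I.roleMult R u v) (I.roleMult S u v) = 0

/-- A DL-Lite^bag ontology. -/
structure Ontology : Type where
  tbox : TBox
  abox : BagABox

/-- `I` is a bag model of the ontology `K`. -/
def BagInterp.IsModel (I : BagInterp) (K : Ontology) : Prop :=
  (∀ ax ∈ K.tbox, I.SatisfiesAx ax) ∧
  ∀ s : Assertion, BagABox.mult K.abox s ≤ I.assertMult s

/-- Satisfiability of an ontology under bag semantics. -/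
def Ontology.Satisfiable (K : Ontology) : Prop := ∃ I : BagInterp, I.IsModel K

/- ## Conjunctive queries -/

/-- Terms: variables or individuals. -/
inductive Term where
  | var : Var → Term
  | ind : Ind → Term
  deriving DecidableEq

def Term.varsOf : Term → List Var
  | Term.var v => [v]
  | Term.ind _ => []

def Term.indsOf : Term → List Ind
  | Term.var _ => []
  | Term.ind a => [a]

/-- Query atoms: concept atoms, role atoms, and equalities. -/
inductive QAtom where
  | conceptAt : AtomicConcept → Term → QAtom
  | roleAt : AtomicRole → Term → Term → QAtom
  | eqAt : Var → Term → QAtom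
  deriving DecidableEq

def QAtom.terms : QAtom → List Term
  | QAtom.conceptAt _ t => [t]
  | QAtom.roleAt _ t₁ t₂ => [t₁, t₂]
  | QAtom.eqAt z t => [Term.var z, t]

def QAtom.vars : QAtom → List Var
  | QAtom.conceptAt _ t => t.varsOf
  | QAtom.roleAt _ t₁ t₂ => t₁.varsOf ++ t₂.varsOf
  | QAtom.eqAt z t => z :: t.varsOf

/-- A conjunctive query `q(x) = ∃y. φ(x,y)`: a tuple of answer variables,
a tuple of existential variables, and a conjunction (list, i.e. allowing
repetitions) of atoms. -/
structure CQ : Type where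
  answerVars : List Var
  existVars : List Var
  atoms : List QAtom

def CQ.vars (q : CQ) : List Var := q.answerVars ++ q.existVars

/-- Value of a term under a valuation of the variables. -/
def termVal (I : BagInterp) (f : Var → I.Δ) : Term → I.Δ
  | Term.var v => f v
  | Term.ind a => I.indMap a

/-- Multiplicity contributed by an atom under a valuation: for predicate atoms the
multiplicity of the image tuple, for equalities the indicator of satisfaction. -/
def QAtom.mult (I : BagInterp) (f : Var → I.Δ) : QAtom → ℕ∞
  | QAtom.conceptAt A t => I.cI A (termVal I f t)
  | QAtom.roleAt P t₁ t₂ => I.rI P (termVal I f t₁) (termVal I f t₂)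
  | QAtom.eqAt z t => if f z = termVal I f t then 1 else 0

/-- The bag answers `q^I(ā)`: the sum, over all valuations of the variables of `q`
mapping the answer variables to `ā` (valuations are normalized to a fixed junk
value outside the variables of `q`), of the product of the multiplicities of the
atom occurrences of `q`. -/
def CQ.bagAnswer (q : CQ) (I : BagInterp) (a : List Ind) : ℕ∞ :=
  bagSum (fun f : {f : Var → I.Δ //
      (∀ v, v ∉ q.vars → f v = I.indMap 0) ∧
      q.answerVars.map f = a.map I.indMap} =>
    (q.atoms.map (QAtom.mult I f.1)).prod)

/-- Bag certain answers: pointwise minimum over all bag models. -/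
def bagCertain (K : Ontology) (q : CQ) (a : List Ind) : ℕ∞ :=
  ⨅ (I : BagInterp) (_ : I.IsModel K), q.bagAnswer I a

/-- Base relation of the equivalence relation generated by the equality atoms. -/
def CQ.eqBase (q : CQ) : Term → Term → Prop := fun t₁ t₂ =>
  ∃ z t, QAtom.eqAt z t ∈ q.atoms ∧ t₁ = Term.var z ∧ t₂ = t

/-- Equivalence of terms generated by the equality atoms of `q`. -/
def CQ.eqRel (q : CQ) : Term → Term → Prop := Relation.EqvGen q.eqBase

/-- Safety: the class of every variable contains a term occurring in a
non-equality atom. -/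
def CQ.Safe (q : CQ) : Prop :=
  ∀ v ∈ q.vars, ∃ t : Term, ∃ atm ∈ q.atoms,
    (∀ z s, atm ≠ QAtom.eqAt z s) ∧ t ∈ QAtom.terms atm ∧ q.eqRel (Term.var v) t

/-- Well-formedness of CQs: repetition-free disjoint tuples of variables, all
variables of the atoms among the declared variables, and safety. -/
def CQ.WellFormed (q : CQ) : Prop :=
  q.answerVars.Nodup ∧ q.existVars.Nodup ∧
  (∀ v ∈ q.answerVars, v ∉ q.existVars) ∧
  (∀ atm ∈ q.atoms, ∀ v ∈ QAtom.vars atm, v ∈ q.vars) ∧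
  q.Safe

def CQ.mentionsTerm (q : CQ) (t : Term) : Prop := ∃ atm ∈ q.atoms, t ∈ QAtom.terms atm

/-- Adjacency in the Gaifman graph of `q` (on terms; equality atoms merge the
classes of their two terms, which for connectivity purposes is the same as
making them adjacent). -/
def CQ.gaifmanAdj (q : CQ) : Term → Term → Prop := fun t₁ t₂ =>
  ∃ atm ∈ q.atoms, t₁ ∈ QAtom.terms atm ∧ t₂ ∈ QAtom.terms atm

/-- A CQ is rooted if every connected component of its Gaifman graph contains
an answer variable or an individual. -/
def CQ.Rooted (q : CQ) : Prop :=
  ∀ t : Term, q.mentionsTerm t →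
    ∃ t' : Term, Relation.ReflTransGen q.gaifmanAdj t t' ∧
      ((∃ v ∈ q.answerVars, t' = Term.var v) ∨ ∃ a : Ind, t' = Term.ind a)

/- ## Set semantics -/

/-- A classical (set) interpretation. -/
structure SetInterp : Type 1 where
  Δ : Type
  dne : Nonempty Δ
  indMap : Ind → Δ
  indInj : Function.Injective indMap
  cI : AtomicConcept → Set Δ
  rI : AtomicRole → Set (Δ × Δ)

def SetInterp.roleSet (I : SetInterp) : Role → Set (I.Δ × I.Δ)
  | Role.atomic P => I.rI P
  | Role.inv P => {p | (p.2, p.1) ∈ I.rI P}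

def SetInterp.conceptSet (I : SetInterp) : DLConcept → Set I.Δ
  | DLConcept.atomic A => I.cI A
  | DLConcept.ex R => {u | ∃ v, (u, v) ∈ I.roleSet R}

def SetInterp.SatisfiesAx (I : SetInterp) : TBoxAxiom → Prop
  | TBoxAxiom.cIncl C D => I.conceptSet C ⊆ I.conceptSet D
  | TBoxAxiom.rIncl R S => I.roleSet R ⊆ I.roleSet S
  | TBoxAxiom.cDisj C D => I.conceptSet C ∩ I.conceptSet D = ∅
  | TBoxAxiom.rDisj R S => I.roleSet R ∩ I.roleSet S = ∅

def SetInterp.SatisfiesAssertion (I : SetInterp) : Assertion → Prop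
  | Assertion.conceptA A a => I.indMap a ∈ I.cI A
  | Assertion.roleA P a b => (I.indMap a, I.indMap b) ∈ I.rI P

/-- `I` is a (set) model of the TBox `T` and the set ABox `A`. -/
def SetInterp.IsModelOf (I : SetInterp) (T : TBox) (A : Finset Assertion) : Prop :=
  (∀ ax ∈ T, I.SatisfiesAx ax) ∧ ∀ s ∈ A, I.SatisfiesAssertion s

def setTermVal (I : SetInterp) (f : Var → I.Δ) : Term → I.Δ
  | Term.var v => f v
  | Term.ind a => I.indMap a

def SetInterp.SatAtom (I : SetInterp) (f : Var → I.Δ) : QAtom → Prop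
  | QAtom.conceptAt A t => setTermVal I f t ∈ I.cI A
  | QAtom.roleAt P t₁ t₂ => (setTermVal I f t₁, setTermVal I f t₂) ∈ I.rI P
  | QAtom.eqAt z t => f z = setTermVal I f t

/-- `q(ā)` holds in the set interpretation `I`. -/
def SetInterp.SatCQ (I : SetInterp) (q : CQ) (a : List Ind) : Prop :=
  ∃ f : Var → I.Δ, q.answerVars.map f = a.map I.indMap ∧ ∀ atm ∈ q.atoms, I.SatAtom f atm

/-- Entailment of a concept inclusion from a TBox (standard set semantics). -/
def TBox.EntailsCI (T : TBox) (C D : DLConcept) : Prop :=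
  ∀ I : SetInterp, (∀ ax ∈ T, I.SatisfiesAx ax) → I.conceptSet C ⊆ I.conceptSet D

/- ## The canonical bag model -/

/-- Domain elements of the canonical model: individuals and anonymous elements
`w^j_{u,R}`. -/
inductive CanElem where
  | ind : Ind → CanElem
  | anon : CanElem → Role → ℕ → CanElem
  deriving DecidableEq

def CanElem.isAnon : CanElem → Prop
  | CanElem.ind _ => False
  | CanElem.anon _ _ _ => True

/-- A stage of the canonical-model construction: a set of active elements and
bag interpretations of the predicates. -/
structure PreInterp : Type where
  active : Set CanElem
  c : AtomicConcept → CanElem → ℕ∞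
  r : AtomicRole → CanElem → CanElem → ℕ∞

def PreInterp.toInterp (P : PreInterp) : BagInterp where
  Δ := CanElem
  dne := ⟨CanElem.ind 0⟩
  indMap := CanElem.ind
  indInj := fun a b h => by cases h; rfl
  cI := P.c
  rI := P.r

/-- Concept closure: `ccl(u,I,T)(C)` is the supremum of `C₀^I(u)` over all
concepts `C₀` with `T ⊨ C₀ ⊑ C`. -/
def cclI (T : TBox) (I : BagInterp) (C : DLConcept) (u : I.Δ) : ℕ∞ :=
  ⨆ C₀ : {C₀ : DLConcept // TBox.EntailsCI T C₀ C}, I.conceptMult C₀.1 u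

def PreInterp.ccl (P : PreInterp) (T : TBox) (u : CanElem) (C : DLConcept) : ℕ∞ :=
  cclI T P.toInterp C u

/-- `δ = ccl(u,C_{i-1},T)(∃R) − (∃R)^{C_{i-1}}(u)` (truncated subtraction). -/
def PreInterp.delta (P : PreInterp) (T : TBox) (u : CanElem) (R : Role) : ℕ∞ :=
  P.ccl T u (DLConcept.ex R) - P.toInterp.conceptMult (DLConcept.ex R) u

/-- The anonymous elements freshly added when stepping from `P`. -/
def PreInterp.NewAnon (P : PreInterp) (T : TBox) (w : CanElem) : Prop :=
  ∃ u R j, w = CanElem.anon u R j ∧ u ∈ P.active ∧ (j : ℕ∞) < P.delta T u R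

/-- One step of the canonical-model construction. -/
def PreInterp.step (P : PreInterp) (T : TBox) : PreInterp where
  active := P.active ∪ {w | P.NewAnon T w}
  c := fun A u => if u ∈ P.active then P.ccl T u (DLConcept.atomic A) else 0
  r := fun P₀ u v =>
    if u ∈ P.active ∧ v ∈ P.active then P.r P₀ u v
    else if ∃ j, v = CanElem.anon u (Role.atomic P₀) j ∧ P.NewAnon T v then 1
    else if ∃ j, u = CanElem.anon v (Role.inv P₀) j ∧ P.NewAnon T u then 1
    else 0

/-- The stages `C_i(K)` of the canonical bag model. -/
def canStage (K : Ontology) : ℕ → PreInterp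
  | 0 =>
    { active := Set.range CanElem.ind
      c := fun A u =>
        match u with
        | CanElem.ind a => BagABox.mult K.abox (Assertion.conceptA A a)
        | _ => 0
      r := fun P u v =>
        match u, v with
        | CanElem.ind a, CanElem.ind b => BagABox.mult K.abox (Assertion.roleA P a b)
        | _, _ => 0 }
  | (i + 1) => (canStage K i).step K.tbox

/-- The canonical bag model `C(K) = ⋃_{i ≥ 0} C_i(K)` (pointwise maximum). -/
def canInterp (K : Ontology) : BagInterp where
  Δ := CanElem
  dne := ⟨CanElem.ind 0⟩
  indMap := CanElem.ind
  indInj := fun a b h => by cases h; rfl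
  cI := fun A u => ⨆ i, (canStage K i).c A u
  rI := fun P u v => ⨆ i, (canStage K i).r P u v

/-- The canonical bag model `C(⟨∅,A⟩)` of the ontology with empty TBox:
individuals as domain, every predicate interpreted by its ABox bag. -/
def emptyCanInterp (A : BagABox) : BagInterp where
  Δ := Ind
  dne := ⟨0⟩
  indMap := id
  indInj := fun _ _ h => h
  cI := fun C a => BagABox.mult A (Assertion.conceptA C a)
  rI := fun P a b => BagABox.mult A (Assertion.roleA P a b)

/-- `[q,z]^{C(K)}`: bag answers over the canonical model computed only over
valuations sending the variables of `z` to anonymous elements and the remaining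
existential variables to individuals. -/
def CQ.restrictedAnswer (q : CQ) (K : Ontology) (z : Finset Var) (a : List Ind) : ℕ∞ :=
  bagSum (fun f : {f : Var → CanElem //
      (∀ v, v ∉ q.vars → f v = CanElem.ind 0) ∧
      q.answerVars.map f = a.map CanElem.ind ∧
      ∀ v ∈ q.existVars, (v ∈ z → CanElem.isAnon (f v)) ∧ (v ∉ z → ∃ b : Ind, f v = CanElem.ind b)} =>
    (q.atoms.map (QAtom.mult (canInterp K) f.1)).prod)

/- ## Ma-connected subsets, realisability, and the per-`z` rewritten query -/

/-- `t` is a variable belonging to `z`. -/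
def Term.IsZVar (t : Term) (z : Finset Var) : Prop := ∃ v ∈ z, t = Term.var v

/-- Adjacency in the Gaifman graph restricted to nodes that are variables of `z`. -/
def CQ.zAdj (q : CQ) (z : Finset Var) : Term → Term → Prop := fun t₁ t₂ =>
  q.gaifmanAdj t₁ t₂ ∧ t₁.IsZVar z ∧ t₂.IsZVar z

/-- `z'` is maximally connected in the anonymous part (ma-connected) within `z`. -/
def CQ.MAConnected (q : CQ) (z z' : Finset Var) : Prop :=
  z' ⊆ z ∧
  (∀ v ∈ z', ∀ w ∈ z, Relation.ReflTransGen (q.zAdj z) (Term.var v) (Term.var w) → w ∈ z') ∧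
  (∀ v ∈ z', ∀ w ∈ z', Relation.ReflTransGen (q.zAdj z) (Term.var v) (Term.var w))

/-- `φ_{z'}`: the subconjunction of all atoms of `q` mentioning a variable of `z'`. -/
def CQ.subAtoms (q : CQ) (z' : Finset Var) : List QAtom :=
  q.atoms.filter (fun atm => decide (∃ v ∈ z', v ∈ QAtom.vars atm))

def termsOfList (l : List QAtom) : List Term :=
  l.foldr (fun atm acc => QAtom.terms atm ++ acc) []

/-- `t_{z'}`: all terms occurring in `φ_{z'}` that are not variables of `z`. -/
def CQ.tTerms (q : CQ) (z z' : Finset Var) : List Term :=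
  (termsOfList (q.subAtoms z')).filter (fun t => decide (¬ t.IsZVar z))

/-- `atm` is a legitimate choice of `α_{z'}`: an atom of `φ_{z'}` of the form
`P(t,z)` or `P(z,t)` with `z ∈ z'` and the term `t` not a variable of `z`. -/
def IsAlphaFor (q : CQ) (z z' : Finset Var) (atm : QAtom) : Prop :=
  atm ∈ q.subAtoms z' ∧
  ((∃ P t v, v ∈ z' ∧ ¬ Term.IsZVar t z ∧ atm = QAtom.roleAt P t (Term.var v)) ∨
   (∃ P t v, v ∈ z' ∧ ¬ Term.IsZVar t z ∧ atm = QAtom.roleAt P (Term.var v) t))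

def CQ.inds (q : CQ) : List Ind :=
  (termsOfList q.atoms).foldr (fun t acc => t.indsOf ++ acc) []

def CQ.maxInd (q : CQ) : Ind := q.inds.foldr max 0

/-- The individual `a` of `q^a_{z'}`: the individual among `t_{z'}` if one
exists, and a fresh individual otherwise. -/
def freshA (q : CQ) (z z' : Finset Var) : Ind :=
  if h : ∃ c : Ind, Term.ind c ∈ q.tTerms z z' then h.choose else q.maxInd + 1

/-- A fresh individual `b` (distinct from `freshA`). -/
def freshB (q : CQ) : Ind := q.maxInd + 2

/-- The one-assertion bag ABox `A'` used to test realisability: `{P(a,b)}` if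
`α_{z'} = P(t,z)` and `{P(b,a)}` if `α_{z'} = P(z,t)`. -/
def alphaABox (z' : Finset Var) (atm : QAtom) (a b : Ind) : BagABox :=
  match atm with
  | QAtom.roleAt P _ t₂ =>
      if Term.IsZVar t₂ z' then {Assertion.roleA P a b} else {Assertion.roleA P b a}
  | _ => 0

def subVars (q : CQ) (z' : Finset Var) : List Var :=
  (q.subAtoms z').foldr (fun atm acc => QAtom.vars atm ++ acc) []

/-- The bag answer `(q^a_{z'})^{C(⟨T,A'⟩)}(⟨⟩)` of the Boolean query
`q^a_{z'}() = ∃x'.∃z'. φ_{z'} ∧ ⋀_{t ∈ t_{z'}}(t = a) ∧ ⋀_{z ∈ z'}(z ≠ a)`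
over the canonical model of `⟨T,A'⟩`. -/
def realQAnswer (T : TBox) (q : CQ) (z z' : Finset Var) (atm : QAtom) : ℕ∞ :=
  bagSum (fun f : {f : Var → CanElem //
      (∀ v, v ∉ subVars q z' → f v = CanElem.ind 0) ∧
      (∀ t ∈ q.tTerms z z',
        termVal (canInterp ⟨T, alphaABox z' atm (freshA q z z') (freshB q)⟩) f t
          = CanElem.ind (freshA q z z')) ∧
      ∀ v ∈ z', f v ≠ CanElem.ind (freshA q z z')} =>
    ((q.subAtoms z').map
      (QAtom.mult (canInterp ⟨T, alphaABox z' atm (freshA q z z') (freshB q)⟩) f.1)).prod)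

/-- Equality-consistency of `z`: no equality atom `z = t` with `z ∈ z` and `t ∉ z`. -/
def EqConsistent (q : CQ) (z : Finset Var) : Prop :=
  ∀ v t, QAtom.eqAt v t ∈ q.atoms → v ∈ z → Term.IsZVar t z

/-- The ma-connected subset `z'` is realisable by `T` (w.r.t. the chosen `α_{z'}`). -/
def RealisableMA (T : TBox) (q : CQ) (z z' : Finset Var) (atm : QAtom) : Prop :=
  1 ≤ realQAnswer T q z z' atm

/-- `z` is realisable by `T`: equality-consistent and every nonempty
ma-connected subset of `z` is realisable. -/
def RealisableZ (T : TBox) (q : CQ) (z : Finset Var) (alpha : Finset Var → QAtom) : Prop :=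
  EqConsistent q z ∧
  ∀ z' : Finset Var, q.MAConnected z z' → z'.Nonempty → RealisableMA T q z z' (alpha z')

/-- The nonempty ma-connected subsets of `z`. -/
def maSets (q : CQ) (z : Finset Var) : Finset (Finset Var) :=
  z.powerset.filter (fun z' => q.MAConnected z z' ∧ z'.Nonempty)

def tTermVars (q : CQ) (z z' : Finset Var) : List Var :=
  (q.tTerms z z').foldr (fun t acc => Term.varsOf t ++ acc) []

/-- The equalities identifying all the terms of `t_{z'}`. -/
def eqAtomsFor (q : CQ) (z z' : Finset Var) : List QAtom :=
  (tTermVars q z z').foldr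
    (fun v acc => ((q.tTerms z z').map (fun t => QAtom.eqAt v t)) ++ acc) []

/-- Atoms of `q_z`: the atoms of `q` not mentioning a variable of `z`, plus,
for each nonempty ma-connected `z' ⊆ z`, the atom `α_{z'}` together with the
equalities identifying the terms of `t_{z'}`. -/
def qzAtoms (q : CQ) (z : Finset Var) (alpha : Finset Var → QAtom) : List QAtom :=
  q.atoms.filter (fun atm => decide (¬ ∃ v ∈ z, v ∈ QAtom.vars atm))
    ++ (maSets q z).toList.foldr (fun z' acc => alpha z' :: (eqAtomsFor q z z' ++ acc)) []

/-- The CQ `q_z(x) = ∃y'. φ_z(x,y')`. -/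
def qz (q : CQ) (z : Finset Var) (alpha : Finset Var → QAtom) : CQ where
  answerVars := q.answerVars
  existVars := q.existVars.filter (fun v => decide (∃ atm ∈ qzAtoms q z alpha, v ∈ QAtom.vars atm))
  atoms := qzAtoms q z alpha

/- ## The BALG rewriting `q̄` -/

/-- Value of an atom of `q_z` after the rewriting step 3 (`chasing back'' with
the TBox): concept atoms `A(t)` become `⋁_{T ⊨ C ⊑ A} ζ_C(t)`, role atoms with a
`z`-variable become the corresponding truncated difference, and the remaining
atoms are evaluated as before. -/
def rewAtomVal (T : TBox) (I : BagInterp) (z : Finset Var) (f : Var → I.Δ) : QAtom → ℕ∞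
  | QAtom.conceptAt A t => cclI T I (DLConcept.atomic A) (termVal I f t)
  | QAtom.roleAt P t₁ t₂ =>
      if Term.IsZVar t₂ z then
        cclI T I (DLConcept.ex (Role.atomic P)) (termVal I f t₁)
          - I.conceptMult (DLConcept.ex (Role.atomic P)) (termVal I f t₁)
      else if Term.IsZVar t₁ z then
        cclI T I (DLConcept.ex (Role.inv P)) (termVal I f t₂)
          - I.conceptMult (DLConcept.ex (Role.inv P)) (termVal I f t₂)
      else I.rI P (termVal I f t₁) (termVal I f t₂)
  | QAtom.eqAt v t => if f v = termVal I f t then 1 else 0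

/-- Bag answers of the BALG query `q̄_z`, obtained from `q_z` by projecting only
the variables of `y' ∖ z` and replacing atoms as in `rewAtomVal`. -/
def rewAnswer (T : TBox) (qq : CQ) (z : Finset Var) (I : BagInterp) (a : List Ind) : ℕ∞ :=
  bagSum (fun f : {f : Var → I.Δ //
      (∀ v, v ∉ qq.answerVars ++ qq.existVars.filter (fun u => decide (u ∉ z)) →
        f v = I.indMap 0) ∧
      qq.answerVars.map f = a.map I.indMap} =>
    (qq.atoms.map (rewAtomVal T I z f.1)).prod)

/- ## BALG¹_ε queries -/

def Term.fvars (t : Term) : Finset Var :=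
  match t with
  | Term.var v => {v}
  | Term.ind _ => ∅

/-- Syntax of BALG¹_ε queries. -/
inductive BQuery where
  | atomC : AtomicConcept → Term → BQuery
  | atomR : AtomicRole → Term → Term → BQuery
  | conj : BQuery → BQuery → BQuery
  | eqSel : BQuery → Var → Term → BQuery
  | proj : List Var → BQuery → BQuery
  | maxU : BQuery → BQuery → BQuery
  | arithU : BQuery → BQuery → BQuery
  | diff : BQuery → BQuery → BQuery

/-- Answer variables of a BALG¹_ε query. -/
def BQuery.fv : BQuery → Finset Var
  | BQuery.atomC _ t => t.fvars
  | BQuery.atomR _ t₁ t₂ => t₁.fvars ∪ t₂.fvars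
  | BQuery.conj q₁ q₂ => q₁.fv ∪ q₂.fv
  | BQuery.eqSel q _ t => q.fv ∪ t.fvars
  | BQuery.proj ys q => q.fv \ ys.toFinset
  | BQuery.maxU q₁ _ => q₁.fv
  | BQuery.arithU q₁ _ => q₁.fv
  | BQuery.diff q₁ _ => q₁.fv

/-- Well-formedness of BALG¹_ε queries. -/
def BQuery.WF : BQuery → Prop
  | BQuery.atomC _ _ => True
  | BQuery.atomR _ _ _ => True
  | BQuery.conj q₁ q₂ => q₁.WF ∧ q₂.WF
  | BQuery.eqSel q x _ => q.WF ∧ x ∈ q.fv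
  | BQuery.proj _ q => q.WF
  | BQuery.maxU q₁ q₂ => q₁.WF ∧ q₂.WF ∧ q₁.fv = q₂.fv
  | BQuery.arithU q₁ q₂ => q₁.WF ∧ q₂.WF ∧ q₁.fv = q₂.fv
  | BQuery.diff q₁ q₂ => q₁.WF ∧ q₂.WF ∧ q₁.fv = q₂.fv

/-- Semantics of BALG¹_ε queries under a valuation of the answer variables. -/
def BQuery.val (I : BagInterp) : BQuery → (Var → I.Δ) → ℕ∞
  | BQuery.atomC A t, f => I.cI A (termVal I f t)
  | BQuery.atomR P t₁ t₂, f => I.rI P (termVal I f t₁) (termVal I f t₂)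
  | BQuery.conj q₁ q₂, f => q₁.val I f * q₂.val I f
  | BQuery.eqSel q x t, f => if f x = termVal I f t then q.val I f else 0
  | BQuery.proj ys q, f => bagSum (fun g : {g : Var → I.Δ // ∀ v, v ∉ ys → g v = f v} => q.val I g.1)
  | BQuery.maxU q₁ q₂, f => max (q₁.val I f) (q₂.val I f)
  | BQuery.arithU q₁ q₂, f => q₁.val I f + q₂.val I f
  | BQuery.diff q₁ q₂, f => q₁.val I f - q₂.val I f

/-- Bag answers of a BALG¹_ε query with answer variables `xs` on a tuple `a`. -/
def BQuery.answer (Q : BQuery) (xs : List Var) (I : BagInterp) (a : List Ind) : ℕ∞ :=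
  if a.length = xs.length then Q.val I (fun v => I.indMap (a.getD (xs.idxOf v) 0)) else 0

/- ## Enumerated bags, e-homomorphisms, and e-valuations -/

/-- Enumerated copies of a bag of domain elements (for an atomic concept). -/
def EBagC (I : BagInterp) (A : AtomicConcept) : Type :=
  {p : I.Δ × ℕ // 1 ≤ p.2 ∧ (p.2 : ℕ∞) ≤ I.cI A p.1}

/-- Enumerated copies of a bag of pairs (for an atomic role). -/
def EBagR (I : BagInterp) (P : AtomicRole) : Type :=
  {p : (I.Δ × I.Δ) × ℕ // 1 ≤ p.2 ∧ (p.2 : ℕ∞) ≤ I.rI P p.1.1 p.1.2}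

/-- An e-homomorphism between the enumerated versions of two bag interpretations. -/
structure EHom (I J : BagInterp) where
  h : I.Δ → J.Δ
  hInd : ∀ a : Ind, h (I.indMap a) = J.indMap a
  hC : ∀ A : AtomicConcept, EBagC I A → EBagC J A
  hC_fst : ∀ (A : AtomicConcept) (x : EBagC I A), (hC A x).1.1 = h x.1.1
  hR : ∀ P : AtomicRole, EBagR I P → EBagR J P
  hR_fst : ∀ (P : AtomicRole) (x : EBagR I P), (hR P x).1.1 = (h x.1.1.1, h x.1.1.2)

/-- Predicate-injectivity on individuals of an e-homomorphism. -/
def EHom.PredInj {I J : BagInterp} (e : EHom I J) : Prop :=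
  ∀ u : I.Δ, (∃ a : Ind, e.h u = J.indMap a) →
    (∀ A : AtomicConcept, ∀ x y : EBagC I A,
      x.1.1 = u → y.1.1 = u → x.1.2 ≠ y.1.2 → e.hC A x ≠ e.hC A y) ∧
    (∀ P : AtomicRole, ∀ x y : EBagR I P, x.1.1.1 = u → y.1.1.1 = u →
      (x.1.1.2, x.1.2) ≠ (y.1.1.2, y.1.2) → e.hR P x ≠ e.hR P y) ∧
    (∀ P : AtomicRole, ∀ x y : EBagR I P, x.1.1.2 = u → y.1.1.2 = u →
      (x.1.1.1, x.1.2) ≠ (y.1.1.1, y.1.2) → e.hR P x ≠ e.hR P y)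

/-- Enumerated atoms of a CQ (seen as a bag of atoms). -/
def EAtom (q : CQ) : Type := {p : QAtom × ℕ // 1 ≤ p.2 ∧ p.2 ≤ q.atoms.count p.1}

/-- An e-valuation of the enumerated query `q^e` over the enumerated
interpretation `I^e`. -/
structure EVal (q : CQ) (I : BagInterp) where
  ν : Var → I.Δ
  hjunk : ∀ v, v ∉ q.vars → ν v = I.indMap 0
  heq : ∀ z t, QAtom.eqAt z t ∈ q.atoms → ν z = termVal I ν t
  ℓ : EAtom q → ℕ
  hone : ∀ e : EAtom q, 1 ≤ ℓ e
  hconcept : ∀ (e : EAtom q) (A : AtomicConcept) (t : Term),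
    e.1.1 = QAtom.conceptAt A t → (ℓ e : ℕ∞) ≤ I.cI A (termVal I ν t)
  hrole : ∀ (e : EAtom q) (P : AtomicRole) (t₁ t₂ : Term),
    e.1.1 = QAtom.roleAt P t₁ t₂ → (ℓ e : ℕ∞) ≤ I.rI P (termVal I ν t₁) (termVal I ν t₂)
  heqm : ∀ (e : EAtom q) (z : Var) (t : Term), e.1.1 = QAtom.eqAt z t → ℓ e = 1

/-- The tuple of domain elements to which an e-atom is sent by an e-valuation. -/
def EVal.imgTerms {q : CQ} {I : BagInterp} (ev : EVal q I) (e : EAtom q) : List I.Δ :=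
  (QAtom.terms e.1.1).map (termVal I ev.ν)

/-- The enumerated image of an e-atom under an e-valuation. -/
def EVal.img {q : CQ} {I : BagInterp} (ev : EVal q I) (e : EAtom q) : List I.Δ × ℕ :=
  (ev.imgTerms e, ev.ℓ e)

/- ## Auxiliary concrete queries -/

/-- The CQ `ζ_C(x)`: `A(x)`, `∃y.P(x,y)` or `∃y.P(y,x)`. -/
def zetaCQ : DLConcept → CQ
  | DLConcept.atomic A => ⟨[0], [], [QAtom.conceptAt A (Term.var 0)]⟩
  | DLConcept.ex (Role.atomic P) => ⟨[0], [1], [QAtom.roleAt P (Term.var 0) (Term.var 1)]⟩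
  | DLConcept.ex (Role.inv P) => ⟨[0], [1], [QAtom.roleAt P (Term.var 1) (Term.var 0)]⟩

/-- The CQ `q(x) = R(x,x)`. -/
def selfCQ (P : AtomicRole) : CQ := ⟨[0], [], [QAtom.roleAt P (Term.var 0) (Term.var 0)]⟩

/-! A set model becomes a bag model once every fact gets multiplicity `∞`: then inclusion and
disjointness of bags reduce to those of their supports, and any finite ABox multiplicity is
dominated. Conversely, the supports of a bag model form a set model, since `1 ≤ S₁ ≤ S₂` and
`min S₁ S₂ = 0` pass to supports, and `(∃R)^I(u) ≥ 1` iff `R^I(u, v) ≥ 1` for some `v`. -/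

lemma bagSum_eq_zero_iff {α : Type*} {f : α → ℕ∞} : bagSum f = 0 ↔ ∀ v, f v = 0 := by
  simp only [bagSum, ENat.iSup_eq_zero, Finset.sum_eq_zero_iff]
  exact ⟨fun h v => h {v} v (Finset.mem_singleton_self v), fun h _ v _ => h v⟩

lemma one_le_bagSum_iff {α : Type*} {f : α → ℕ∞} : 1 ≤ bagSum f ↔ ∃ v, 1 ≤ f v := by
  simp only [Order.one_le_iff_ne_zero, ne_eq, bagSum_eq_zero_iff, not_forall]

lemma bagSum_eq_top {α : Type*} {f : α → ℕ∞} {v : α} (h : f v = ⊤) : bagSum f = ⊤ :=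
  top_le_iff.mp <| le_iSup_of_le {v} (by simp [h])

lemma bagSum_ite_top {α : Type*} (p : α → Prop) :
    bagSum (fun v => if p v then (⊤ : ℕ∞) else 0) = if ∃ v, p v then ⊤ else 0 := by
  split_ifs with h
  · obtain ⟨v, hv⟩ := h
    exact bagSum_eq_top (v := v) (if_pos hv)
  · push Not at h
    exact bagSum_eq_zero_iff.mpr fun v => if_neg (h v)

lemma ite_top_zero_le_ite_top_zero {p q : Prop} [Decidable p] [Decidable q] (h : p → q) :
    (if p then (⊤ : ℕ∞) else 0) ≤ if q then ⊤ else 0 := by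
  split_ifs <;> simp_all

lemma min_ite_top_zero_eq_zero {p q : Prop} [Decidable p] [Decidable q] (h : ¬ (p ∧ q)) :
    min (if p then (⊤ : ℕ∞) else 0) (if q then ⊤ else 0) = 0 := by
  split_ifs <;> simp_all

def SetInterp.toBag (I : SetInterp) : BagInterp where
  Δ := I.Δ
  dne := I.dne
  indMap := I.indMap
  indInj := I.indInj
  cI := fun A u => if u ∈ I.cI A then ⊤ else 0
  rI := fun P u v => if (u, v) ∈ I.rI P then ⊤ else 0

namespace SetInterp

variable (I : SetInterp)

lemma toBag_roleMult (R : Role) (u v : I.toBag.Δ) :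
    I.toBag.roleMult R u v = if (u, v) ∈ I.roleSet R then ⊤ else 0 := by
  cases R <;> rfl

lemma toBag_conceptMult (C : DLConcept) (u : I.toBag.Δ) :
    I.toBag.conceptMult C u = if u ∈ I.conceptSet C then ⊤ else 0 := by
  cases C with
  | atomic A => rfl
  | ex R =>
    simp only [BagInterp.conceptMult, toBag_roleMult]
    exact bagSum_ite_top _

lemma toBag_assertMult (s : Assertion) :
    I.toBag.assertMult s = if I.SatisfiesAssertion s then ⊤ else 0 := by
  cases s <;> rfl

lemma SatisfiesAx.toBag {ax : TBoxAxiom} (h : I.SatisfiesAx ax) : I.toBag.SatisfiesAx ax := by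
  cases ax with
  | cIncl C D =>
    intro u
    rw [toBag_conceptMult, toBag_conceptMult]
    exact ite_top_zero_le_ite_top_zero (@h u)
  | rIncl R S =>
    intro u v
    rw [toBag_roleMult, toBag_roleMult]
    exact ite_top_zero_le_ite_top_zero (@h (u, v))
  | cDisj C D =>
    intro u
    rw [toBag_conceptMult, toBag_conceptMult]
    exact min_ite_top_zero_eq_zero (Set.eq_empty_iff_forall_notMem.mp h u)
  | rDisj R S =>
    intro u v
    rw [toBag_roleMult, toBag_roleMult]
    exact min_ite_top_zero_eq_zero (Set.eq_empty_iff_forall_notMem.mp h (u, v))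

end SetInterp

def BagInterp.toSet (I : BagInterp) : SetInterp where
  Δ := I.Δ
  dne := I.dne
  indMap := I.indMap
  indInj := I.indInj
  cI := fun A => {u | 1 ≤ I.cI A u}
  rI := fun P => {p | 1 ≤ I.rI P p.1 p.2}

namespace BagInterp

variable (I : BagInterp)

lemma mem_toSet_roleSet (R : Role) (u v : I.toSet.Δ) :
    (u, v) ∈ I.toSet.roleSet R ↔ 1 ≤ I.roleMult R u v := by
  cases R <;> rfl

lemma mem_toSet_conceptSet (C : DLConcept) (u : I.toSet.Δ) :
    u ∈ I.toSet.conceptSet C ↔ 1 ≤ I.conceptMult C u := by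
  cases C with
  | atomic A => rfl
  | ex R =>
    exact (exists_congr fun v => mem_toSet_roleSet I R u v).trans one_le_bagSum_iff.symm

lemma toSet_satisfiesAssertion (s : Assertion) :
    I.toSet.SatisfiesAssertion s ↔ 1 ≤ I.assertMult s := by
  cases s <;> rfl

lemma SatisfiesAx.toSet {ax : TBoxAxiom} (h : I.SatisfiesAx ax) : I.toSet.SatisfiesAx ax := by
  cases ax with
  | cIncl C D =>
    intro u hu
    rw [mem_toSet_conceptSet] at hu ⊢
    exact hu.trans (h u)
  | rIncl R S =>
    rintro ⟨u, v⟩ huv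
    rw [mem_toSet_roleSet] at huv ⊢
    exact huv.trans (h u v)
  | cDisj C D =>
    refine Set.eq_empty_iff_forall_notMem.mpr fun u ⟨hC, hD⟩ => ?_
    rw [mem_toSet_conceptSet] at hC hD
    simpa [h u] using le_min hC hD
  | rDisj R S =>
    refine Set.eq_empty_iff_forall_notMem.mpr fun ⟨u, v⟩ ⟨hR, hS⟩ => ?_
    rw [mem_toSet_roleSet] at hR hS
    simpa [h u v] using le_min hR hS

end BagInterp

lemma SetInterp.IsModelOf.toBag {I : SetInterp} {T : TBox} {A : Finset Assertion}
    {A' : BagABox} (hI : I.IsModelOf T A) (hsupp : ∀ s, 1 ≤ BagABox.mult A' s → s ∈ A) :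
    I.toBag.IsModel ⟨T, A'⟩ := by
  refine ⟨fun ax hax => (hI.1 ax hax).toBag, fun s => ?_⟩
  rw [I.toBag_assertMult]
  by_cases hs : s ∈ A
  · simp [hI.2 s hs]
  · have hs0 : BagABox.mult A' s = 0 := by
      simpa [Order.one_le_iff_ne_zero] using mt (hsupp s) hs
    simp [hs0]

lemma BagInterp.IsModel.toSet {J : BagInterp} {T : TBox} {A : Finset Assertion}
    {A' : BagABox} (hJ : J.IsModel ⟨T, A'⟩) (hsupp : ∀ s ∈ A, 1 ≤ BagABox.mult A' s) :
    J.toSet.IsModelOf T A :=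
  ⟨fun ax hax => (hJ.1 ax hax).toSet,
    fun s hs => (J.toSet_satisfiesAssertion s).mpr ((hsupp s hs).trans (hJ.2 s))⟩

/-- For a DL-Lite_R TBox `T`, a set ABox `A` and a bag ABox `A'`
whose support equals `A`, the set ontology `⟨T,A⟩` is satisfiable (set semantics)
iff the bag ontology `⟨T,A'⟩` is satisfiable (bag semantics). -/
theorem statement_0 (T : TBox) (A : Finset Assertion) (A' : BagABox)
    (hsupp : ∀ s : Assertion, 1 ≤ BagABox.mult A' s ↔ s ∈ A) :
    (∃ I : SetInterp, I.IsModelOf T A) ↔ Ontology.Satisfiable ⟨T, A'⟩ :=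
  ⟨fun ⟨I, hI⟩ => ⟨I.toBag, hI.toBag fun s => (hsupp s).mp⟩,
    fun ⟨J, hJ⟩ => ⟨J.toSet, hJ.toSet fun s => (hsupp s).mpr⟩⟩
end
end

section
/- Let T be the DL-Lite_core TBox {Vertex ⊑ ∃hasColour, ∃hasColour⁻ ⊑ ACol} and q the Boolean CQ q() = ∃x,y,z,w. Edge(x,y) ∧ hasColour(x,z) ∧ hasColour(y,z) ∧ ACol(w). For any finite undirected connected graph G = (V,E) without self-loops, with the vertices of V, a fresh vertex a, and fresh colours r,g,b all pairwise distinct individuals, let A_G be the bag ABox containing: Vertex(u) with multiplicity 1 for each u ∈ V; Edge(u,v) and Edge(v,u) with multiplicity 1 for each {u,v} ∈ E; ACol(r) with multiplicity |V|+1; ACol(g) and ACol(b) each with multiplicity |V|; and Vertex(a), Edge(a,a), hasColour(a,r) each with multiplicity 1. Then G is not 3-colourable if and only if the bag certain answer q^{⟨T,A_G⟩}(⟨⟩) is at least 3·|V| + 2. -/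
/-!
Common formalization of the bag semantics of DL-Lite ontologies
(Nikolaou et al., "The Bag Semantics of Ontology-Based Data Access").
-/

open scoped Classical

noncomputable section

/-- Vertex = atomic concept 0, ACol = atomic concept 1, Edge = atomic role 0,
hasColour = atomic role 1.  TBox `{Vertex ⊑ ∃hasColour, ∃hasColour⁻ ⊑ ACol}`. -/
def tbox3 : TBox :=
  {TBoxAxiom.cIncl (DLConcept.atomic 0) (DLConcept.ex (Role.atomic 1)),
   TBoxAxiom.cIncl (DLConcept.ex (Role.inv 1)) (DLConcept.atomic 1)}

/-- The bag ABox `A_G` for a graph `G = (V,E)` (vertices `u` encoded as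
individuals `u+4`, the fresh vertex `a` as `0` and the fresh colours `r,g,b`
as `1,2,3`): `Vertex(u)` for `u ∈ V`; `Edge(u,v)` for `(u,v) ∈ E`;
`ACol(r)` with multiplicity `|V|+1`, `ACol(g)` and `ACol(b)` with multiplicity
`|V|`; and `Vertex(a)`, `Edge(a,a)`, `hasColour(a,r)`, each with multiplicity 1. -/
def aboxG (V : Finset ℕ) (E : Finset (ℕ × ℕ)) : BagABox :=
  V.val.map (fun u => Assertion.conceptA 0 (u + 4))
    + E.val.map (fun p => Assertion.roleA 0 (p.1 + 4) (p.2 + 4))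
    + Multiset.replicate (V.card + 1) (Assertion.conceptA 1 1)
    + Multiset.replicate V.card (Assertion.conceptA 1 2)
    + Multiset.replicate V.card (Assertion.conceptA 1 3)
    + {Assertion.conceptA 0 0, Assertion.roleA 0 0 0, Assertion.roleA 1 0 1}

/-- The Boolean CQ
`q() = ∃x,y,z,w. Edge(x,y) ∧ hasColour(x,z) ∧ hasColour(y,z) ∧ ACol(w)`. -/
def q3 : CQ :=
  ⟨[], [0, 1, 2, 3],
    [QAtom.roleAt 0 (Term.var 0) (Term.var 1),
     QAtom.roleAt 1 (Term.var 0) (Term.var 2),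
     QAtom.roleAt 1 (Term.var 1) (Term.var 2),
     QAtom.conceptAt 1 (Term.var 3)]⟩

/-!
The query is disconnected: its bag answer is `M · C`, where `M` counts (with multiplicity) the
matches of `Edge(x,y) ∧ hasColour(x,z) ∧ hasColour(y,z)` and `C` is the total `ACol` mass. In
every model the assertions about `a` give `M ≥ 1`, and those about `r, g, b` give
`C ≥ 3|V| + 1`. The TBox gives every vertex a colour. If some edge is monochromatic then
`M ≥ 2`; otherwise the colours form a proper colouring, which for a graph that is not
3-colourable uses an element other than `r, g, b`; that element is in `ACol`, so
`C ≥ 3|V| + 2`. Conversely, adding `hasColour(u, γ u)` to the ABox for a proper 3-colouring `γ`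
gives a model with `M = 1` and `C = 3|V| + 1`.
-/

section BagSum

variable {α β : Type*}

lemma sum_le_bagSum (f : α → ℕ∞) (s : Finset α) : ∑ x ∈ s, f x ≤ bagSum f :=
  le_iSup (fun s : Finset α => ∑ x ∈ s, f x) s

lemma le_bagSum (f : α → ℕ∞) (x : α) : f x ≤ bagSum f := by
  simpa using sum_le_bagSum f {x}

lemma bagSum_le_sum_of_support (f : α → ℕ∞) (s : Finset α) (hs : ∀ x, f x ≠ 0 → x ∈ s) :
    bagSum f ≤ ∑ x ∈ s, f x :=
  iSup_le fun _ => (Finset.sum_filter_of_ne fun x _ hx => hs x hx).symm.trans_le <|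
    Finset.sum_le_sum_of_subset fun _ hx => (Finset.mem_filter.mp hx).2

lemma exists_ne_zero_of_bagSum_ne_zero {f : α → ℕ∞} (h : bagSum f ≠ 0) : ∃ x, f x ≠ 0 := by
  contrapose! h
  simp [bagSum, h]

lemma bagSum_comp_equiv (f : β → ℕ∞) (e : α ≃ β) : bagSum (f ∘ e) = bagSum f := by
  unfold bagSum
  rw [← e.finsetCongr.iSup_comp]
  simp [Equiv.finsetCongr_apply, Finset.sum_map]

end BagSum

lemma bagCertain_le_bagAnswer {K : Ontology} {I : BagInterp} (hM : I.IsModel K) (q : CQ)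
    (a : List Ind) : bagCertain K q a ≤ q.bagAnswer I a :=
  iInf₂_le I hM

lemma le_bagCertain {K : Ontology} {q : CQ} {a : List Ind} {c : ℕ∞}
    (h : ∀ I : BagInterp, I.IsModel K → c ≤ q.bagAnswer I a) : c ≤ bagCertain K q a :=
  le_iInf₂ h

lemma Finset.count_map_val {α β : Type*} [DecidableEq β] {f : α → β}
    (hf : Function.Injective f) (s : Finset α) (b : β) :
    (s.val.map f).count b = if ∃ a ∈ s, f a = b then 1 else 0 := by
  rw [show s.val.map f = (s.map ⟨f, hf⟩).val from rfl,
    Multiset.count_eq_of_nodup (s.map ⟨f, hf⟩).nodup]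
  simp

section ABoxCounts

variable (V : Finset ℕ) (E : Finset (ℕ × ℕ))

lemma count_vertex_aboxG (u : ℕ) :
    (aboxG V E).count (.conceptA 0 u) = if u = 0 ∨ ∃ w ∈ V, w + 4 = u then 1 else 0 := by
  have hinj : Function.Injective fun w : ℕ => Assertion.conceptA 0 (w + 4) := by
    intro a b h
    simpa using h
  simp only [aboxG, Multiset.count_add, Finset.count_map_val hinj]
  rcases eq_or_ne u 0 with rfl | hu <;> simp [Multiset.count_replicate, *]

lemma count_aCol_aboxG (v : ℕ) :
    (aboxG V E).count (.conceptA 1 v) =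
      if v = 1 then V.card + 1 else if v = 2 ∨ v = 3 then V.card else 0 := by
  -- both orientations, since `Multiset.count_replicate` produces `1 = v`
  obtain rfl | rfl | rfl | h :
      v = 1 ∨ v = 2 ∨ v = 3 ∨ (v ≠ 1 ∧ v ≠ 2 ∧ v ≠ 3 ∧ 1 ≠ v ∧ 2 ≠ v ∧ 3 ≠ v) := by
    omega
  all_goals simp [aboxG, Multiset.count_add, Multiset.count_replicate, *]

lemma count_edge_aboxG (u v : ℕ) :
    (aboxG V E).count (.roleA 0 u v) =
      if (u = 0 ∧ v = 0) ∨ ∃ p ∈ E, p.1 + 4 = u ∧ p.2 + 4 = v then 1 else 0 := by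
  have hinj : Function.Injective fun p : ℕ × ℕ => Assertion.roleA 0 (p.1 + 4) (p.2 + 4) := by
    intro a b h
    simpa [Prod.ext_iff] using h
  simp only [aboxG, Multiset.count_add, Finset.count_map_val hinj]
  by_cases h0 : u = 0 ∧ v = 0 <;> simp [Multiset.count_replicate, h0]

lemma count_hasColour_aboxG (u v : ℕ) :
    (aboxG V E).count (.roleA 1 u v) = if u = 0 ∧ v = 1 then 1 else 0 := by
  simp [aboxG, Multiset.count_add, Multiset.count_replicate, Multiset.count_singleton]

end ABoxCounts

def monoEdgeMult (I : BagInterp) (m : I.Δ × I.Δ × I.Δ) : ℕ∞ :=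
  I.rI 0 m.1 m.2.1 * I.rI 1 m.1 m.2.2 * I.rI 1 m.2.1 m.2.2

def q3ValuationEquiv (I : BagInterp) :
    {f : Var → I.Δ // (∀ v, v ∉ q3.vars → f v = I.indMap 0) ∧
      q3.answerVars.map f = ([] : List Ind).map I.indMap} ≃ (I.Δ × I.Δ × I.Δ) × I.Δ where
  toFun f := ((f.1 0, f.1 1, f.1 2), f.1 3)
  invFun t := ⟨fun v => if v = 0 then t.1.1 else if v = 1 then t.1.2.1
      else if v = 2 then t.1.2.2 else if v = 3 then t.2 else I.indMap 0,
    fun v hv => by simp_all [q3, CQ.vars], rfl⟩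
  left_inv f := by
    refine Subtype.ext (funext fun v => ?_)
    rcases v with _ | _ | _ | _ | v
    · rfl
    · rfl
    · rfl
    · rfl
    · exact (f.2.1 _ (by simp [q3, CQ.vars])).symm
  right_inv _ := rfl

lemma q3_bagAnswer (I : BagInterp) :
    q3.bagAnswer I [] =
      bagSum fun t : (I.Δ × I.Δ × I.Δ) × I.Δ => monoEdgeMult I t.1 * I.cI 1 t.2 := by
  rw [CQ.bagAnswer, ← bagSum_comp_equiv _ (q3ValuationEquiv I)]
  congr with f
  simp only [q3, List.map_cons, QAtom.mult, termVal, List.map_nil, List.prod_cons, List.prod_nil,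
    mul_one, monoEdgeMult, mul_assoc]
  rfl

lemma sum_mul_sum_le_q3_bagAnswer (I : BagInterp) (P : Finset (I.Δ × I.Δ × I.Δ))
    (S : Finset I.Δ) :
    (∑ m ∈ P, monoEdgeMult I m) * ∑ w ∈ S, I.cI 1 w ≤ q3.bagAnswer I [] := by
  rw [q3_bagAnswer, Finset.sum_mul_sum, ← Finset.sum_product']
  exact sum_le_bagSum _ _

lemma q3_bagAnswer_le_sum_mul_sum (I : BagInterp) (P : Finset (I.Δ × I.Δ × I.Δ))
    (S : Finset I.Δ) (hP : ∀ m, monoEdgeMult I m ≠ 0 → m ∈ P)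
    (hS : ∀ w, I.cI 1 w ≠ 0 → w ∈ S) :
    q3.bagAnswer I [] ≤ (∑ m ∈ P, monoEdgeMult I m) * ∑ w ∈ S, I.cI 1 w := by
  rw [q3_bagAnswer, Finset.sum_mul_sum, ← Finset.sum_product']
  refine bagSum_le_sum_of_support _ _ fun t ht => ?_
  obtain ⟨hm, hw⟩ := mul_ne_zero_iff.mp ht
  exact Finset.mem_product.mpr ⟨hP _ hm, hS _ hw⟩

lemma one_le_monoEdgeMult {I : BagInterp} {x y z : I.Δ} (hxy : 1 ≤ I.rI 0 x y)
    (hxz : 1 ≤ I.rI 1 x z) (hyz : 1 ≤ I.rI 1 y z) : 1 ≤ monoEdgeMult I (x, y, z) :=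
  one_le_mul_of_one_le_of_one_le (one_le_mul_of_one_le_of_one_le hxy hxz) hyz

lemma exists_monochromatic_or_avoids {β : Type*} {V : Finset ℕ} {E : Finset (ℕ × ℕ)}
    (hVE : ∀ p ∈ E, p.1 ∈ V ∧ p.2 ∈ V) (h3 : ¬ ∃ γ : ℕ → Fin 3, ∀ p ∈ E, γ p.1 ≠ γ p.2)
    (c : ℕ → β) (x y z : β) :
    (∃ p ∈ E, c p.1 = c p.2) ∨ ∃ u ∈ V, c u ∉ ({x, y, z} : Finset β) := by
  by_contra! h
  obtain ⟨hproper, hxyz⟩ := h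
  refine h3 ⟨fun u => if c u = x then 0 else if c u = y then 1 else 2, fun p hp => ?_⟩
  have h1 := hxyz _ (hVE p hp).1
  have h2 := hxyz _ (hVE p hp).2
  have h12 := hproper p hp
  simp only [Finset.mem_insert, Finset.mem_singleton] at h1 h2
  clear hproper hxyz h3
  dsimp only
  split_ifs <;> simp_all

def rgb (I : BagInterp) : Finset I.Δ := {I.indMap 1, I.indMap 2, I.indMap 3}

section Models

variable {V : Finset ℕ} {E : Finset (ℕ × ℕ)} {I : BagInterp}

lemma aCol_sum_rgb_le (hM : I.IsModel ⟨tbox3, aboxG V E⟩) :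
    ((3 * V.card + 1 : ℕ) : ℕ∞) ≤ ∑ w ∈ rgb I, I.cI 1 w := by
  have hr : ((V.card + 1 : ℕ) : ℕ∞) ≤ I.cI 1 (I.indMap 1) := by
    simpa [BagABox.mult, BagInterp.assertMult, count_aCol_aboxG] using hM.2 (.conceptA 1 1)
  have hg : (V.card : ℕ∞) ≤ I.cI 1 (I.indMap 2) := by
    simpa [BagABox.mult, BagInterp.assertMult, count_aCol_aboxG] using hM.2 (.conceptA 1 2)
  have hb : (V.card : ℕ∞) ≤ I.cI 1 (I.indMap 3) := by
    simpa [BagABox.mult, BagInterp.assertMult, count_aCol_aboxG] using hM.2 (.conceptA 1 3)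
  rw [rgb, Finset.sum_insert (by simp [I.indInj.eq_iff]),
    Finset.sum_pair (by simp [I.indInj.eq_iff])]
  calc ((3 * V.card + 1 : ℕ) : ℕ∞) = ((V.card + 1 : ℕ) : ℕ∞) + (V.card + V.card) := by
        push_cast
        ring
    _ ≤ _ := by gcongr

lemma one_le_monoEdgeMult_anchor (hM : I.IsModel ⟨tbox3, aboxG V E⟩) :
    1 ≤ monoEdgeMult I (I.indMap 0, I.indMap 0, I.indMap 1) := by
  have hc : 1 ≤ I.rI 1 (I.indMap 0) (I.indMap 1) := by
    simpa [BagABox.mult, BagInterp.assertMult, count_hasColour_aboxG] using hM.2 (.roleA 1 0 1)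
  refine one_le_monoEdgeMult ?_ hc hc
  simpa [BagABox.mult, BagInterp.assertMult, count_edge_aboxG] using hM.2 (.roleA 0 0 0)

lemma one_le_monoEdgeMult_of_mem (hM : I.IsModel ⟨tbox3, aboxG V E⟩) {p : ℕ × ℕ}
    (hp : p ∈ E) {d : I.Δ} (h1 : 1 ≤ I.rI 1 (I.indMap (p.1 + 4)) d)
    (h2 : 1 ≤ I.rI 1 (I.indMap (p.2 + 4)) d) :
    1 ≤ monoEdgeMult I (I.indMap (p.1 + 4), I.indMap (p.2 + 4), d) := by
  refine one_le_monoEdgeMult ?_ h1 h2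
  simpa [BagABox.mult, BagInterp.assertMult, count_edge_aboxG, hp] using
    hM.2 (.roleA 0 (p.1 + 4) (p.2 + 4))

lemma exists_colour_choice (hM : I.IsModel ⟨tbox3, aboxG V E⟩) :
    ∃ c : ℕ → I.Δ, ∀ u ∈ V, 1 ≤ I.rI 1 (I.indMap (u + 4)) (c u) := by
  have hcolour : ∀ u ∈ V, ∃ d, 1 ≤ I.rI 1 (I.indMap (u + 4)) d := by
    intro u hu
    have hv : 1 ≤ I.cI 0 (I.indMap (u + 4)) := by
      simpa [BagABox.mult, BagInterp.assertMult, count_vertex_aboxG, hu] using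
        hM.2 (.conceptA 0 (u + 4))
    have hax := hM.1 (.cIncl (.atomic 0) (.ex (.atomic 1))) (by simp [tbox3]) (I.indMap (u + 4))
    simp only [BagInterp.conceptMult, BagInterp.roleMult] at hax
    simp_rw [Order.one_le_iff_ne_zero] at hv ⊢
    exact exists_ne_zero_of_bagSum_ne_zero (ne_bot_of_le_ne_bot hv hax)
  have := I.dne
  choose! c hc using hcolour
  exact ⟨c, hc⟩

lemma hasColour_le_aCol (hM : I.IsModel ⟨tbox3, aboxG V E⟩) (u v : I.Δ) :
    I.rI 1 u v ≤ I.cI 1 v := by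
  have hax := hM.1 (.cIncl (.ex (.inv 1)) (.atomic 1)) (by simp [tbox3]) v
  simp only [BagInterp.conceptMult, BagInterp.roleMult] at hax
  exact (le_bagSum (fun u => I.rI 1 u v) u).trans hax

lemma le_q3_bagAnswer_of_not_colourable (hVE : ∀ p ∈ E, p.1 ∈ V ∧ p.2 ∈ V)
    (h3 : ¬ ∃ γ : ℕ → Fin 3, ∀ p ∈ E, γ p.1 ≠ γ p.2) (hM : I.IsModel ⟨tbox3, aboxG V E⟩) :
    ((3 * V.card + 2 : ℕ) : ℕ∞) ≤ q3.bagAnswer I [] := by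
  obtain ⟨c, hc⟩ := exists_colour_choice hM
  set anchor := (I.indMap 0, I.indMap 0, I.indMap 1)
  rcases exists_monochromatic_or_avoids hVE h3 c (I.indMap 1) (I.indMap 2) (I.indMap 3) with
    ⟨p, hp, hpc⟩ | ⟨u, hu, hcu⟩
  · have hne : (I.indMap (p.1 + 4), I.indMap (p.2 + 4), c p.1) ≠ anchor := by
      simp [anchor, I.indInj.eq_iff]
    calc ((3 * V.card + 2 : ℕ) : ℕ∞) ≤ (1 + 1) * ((3 * V.card + 1 : ℕ) : ℕ∞) := by
          norm_cast
          omega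
      _ ≤ (∑ m ∈ {(I.indMap (p.1 + 4), I.indMap (p.2 + 4), c p.1), anchor},
            monoEdgeMult I m) * ∑ w ∈ rgb I, I.cI 1 w := by
          rw [Finset.sum_pair hne]
          gcongr
          · exact one_le_monoEdgeMult_of_mem hM hp (hc _ (hVE p hp).1)
              (hpc ▸ hc _ (hVE p hp).2)
          · exact one_le_monoEdgeMult_anchor hM
          · exact aCol_sum_rgb_le hM
      _ ≤ q3.bagAnswer I [] := sum_mul_sum_le_q3_bagAnswer I _ _
  · calc ((3 * V.card + 2 : ℕ) : ℕ∞) = 1 * (1 + ((3 * V.card + 1 : ℕ) : ℕ∞)) := by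
          push_cast
          ring
      _ ≤ (∑ m ∈ {anchor}, monoEdgeMult I m) * ∑ w ∈ insert (c u) (rgb I), I.cI 1 w := by
          rw [Finset.sum_singleton, Finset.sum_insert (show c u ∉ rgb I from hcu)]
          gcongr
          · exact one_le_monoEdgeMult_anchor hM
          · exact (hc u hu).trans (hasColour_le_aCol hM _ _)
          · exact aCol_sum_rgb_le hM
      _ ≤ q3.bagAnswer I [] := sum_mul_sum_le_q3_bagAnswer I _ _

end Models

/-- Vertex `w` is the individual `w + 4` and colour `γ w` the individual `γ w + 1`, one of
`r, g, b = 1, 2, 3`. -/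
def colouringModel (V : Finset ℕ) (E : Finset (ℕ × ℕ)) (γ : ℕ → Fin 3) : BagInterp where
  Δ := ℕ
  dne := ⟨0⟩
  indMap := id
  indInj := Function.injective_id
  cI A u := (aboxG V E).count (.conceptA A u)
  rI P u v := (aboxG V E).count (.roleA P u v) +
    if P = 1 ∧ ∃ w ∈ V, w + 4 = u ∧ (γ w : ℕ) + 1 = v then 1 else 0

section ColouringModel

variable (V : Finset ℕ) (E : Finset (ℕ × ℕ)) (γ : ℕ → Fin 3)

lemma colouringModel_cI (A u : ℕ) :
    (colouringModel V E γ).cI A u = (aboxG V E).count (.conceptA A u) := rfl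

lemma colouringModel_rI_zero (u v : ℕ) :
    (colouringModel V E γ).rI 0 u v = (aboxG V E).count (.roleA 0 u v) := by
  simp [colouringModel]

lemma colouringModel_rI_one (u v : ℕ) :
    (colouringModel V E γ).rI 1 u v =
      (if u = 0 ∧ v = 1 then 1 else 0) +
        if ∃ w ∈ V, w + 4 = u ∧ (γ w : ℕ) + 1 = v then 1 else 0 := by
  simp [colouringModel, count_hasColour_aboxG]

lemma colouringModel_rI_zero_ne_zero (u v : ℕ) :
    (colouringModel V E γ).rI 0 u v ≠ 0 ↔
      (u = 0 ∧ v = 0) ∨ ∃ p ∈ E, p.1 + 4 = u ∧ p.2 + 4 = v := by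
  rw [colouringModel_rI_zero, count_edge_aboxG]
  split_ifs with h
  · exact iff_of_true (by simp) h
  · exact iff_of_false (by simp) h

lemma colouringModel_rI_one_ne_zero (u v : ℕ) :
    (colouringModel V E γ).rI 1 u v ≠ 0 ↔
      (u = 0 ∧ v = 1) ∨ ∃ w ∈ V, w + 4 = u ∧ (γ w : ℕ) + 1 = v := by
  rw [colouringModel_rI_one]
  simp only [ne_eq, add_eq_zero, ite_eq_right_iff, one_ne_zero, imp_false, ← not_or, not_not]

lemma colouringModel_vertex_le_hasColour (u : ℕ) :
    (colouringModel V E γ).cI 0 u ≤ bagSum fun v : ℕ => (colouringModel V E γ).rI 1 u v := by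
  rw [colouringModel_cI, count_vertex_aboxG]
  split_ifs with hu
  · obtain ⟨c, hc⟩ : ∃ c : ℕ, (colouringModel V E γ).rI 1 u c ≠ 0 := by
      rcases hu with rfl | ⟨w, hw, rfl⟩
      · exact ⟨1, (colouringModel_rI_one_ne_zero V E γ _ _).mpr (.inl ⟨rfl, rfl⟩)⟩
      · exact ⟨(γ w : ℕ) + 1,
          (colouringModel_rI_one_ne_zero V E γ _ _).mpr (.inr ⟨w, hw, rfl, rfl⟩)⟩
    exact_mod_cast (Order.one_le_iff_ne_zero.mpr hc).trans (le_bagSum _ c)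
  · simp

lemma colouringModel_hasColour_le_aCol (v : ℕ) :
    (bagSum fun u : ℕ => (colouringModel V E γ).rI 1 u v) ≤ (colouringModel V E γ).cI 1 v := by
  have hsupp : ∀ u : ℕ, (colouringModel V E γ).rI 1 u v ≠ 0 →
      u ∈ insert 0 (V.image (· + 4)) := by
    intro u hu
    rcases (colouringModel_rI_one_ne_zero V E γ u v).mp hu with ⟨rfl, -⟩ | ⟨w, hw, rfl, -⟩
    · exact Finset.mem_insert_self _ _
    · exact Finset.mem_insert_of_mem (Finset.mem_image_of_mem _ hw)
  have hvertices : ∑ w ∈ V, (colouringModel V E γ).rI 1 (w + 4 : ℕ) v =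
      ((V.filter fun w => (γ w : ℕ) + 1 = v).card : ℕ∞) := by
    rw [← Finset.sum_boole]
    refine Finset.sum_congr rfl fun w hw => ?_
    rw [colouringModel_rI_one]
    simp [hw]
  have hcard : (V.filter fun w => (γ w : ℕ) + 1 = v).card ≤ V.card := Finset.card_filter_le _ _
  have hzero : v ≠ 1 → v ≠ 2 → v ≠ 3 → (V.filter fun w => (γ w : ℕ) + 1 = v).card = 0 := by
    intro h1 h2 h3
    refine Finset.card_eq_zero.mpr (Finset.filter_eq_empty_iff.mpr fun w _ hw => ?_)
    have := (γ w).isLt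
    omega
  refine (bagSum_le_sum_of_support _ _ hsupp).trans ?_
  rw [Finset.sum_insert (by simp), Finset.sum_image (by simp), hvertices, colouringModel_rI_one,
    colouringModel_cI, count_aCol_aboxG]
  simp only [true_and, add_eq_zero, OfNat.ofNat_ne_zero, and_false, false_and, exists_false,
    if_false, add_zero]
  generalize (V.filter fun w => (γ w : ℕ) + 1 = v).card = k at hcard hzero ⊢
  split_ifs <;> norm_cast <;> omega

lemma colouringModel_isModel : (colouringModel V E γ).IsModel ⟨tbox3, aboxG V E⟩ := by
  refine ⟨fun ax hax => ?_, fun s => ?_⟩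
  · simp only [tbox3, Finset.mem_insert, Finset.mem_singleton] at hax
    rcases hax with rfl | rfl
    · exact colouringModel_vertex_le_hasColour V E γ
    · exact colouringModel_hasColour_le_aCol V E γ
  · cases s with
    | conceptA A a => exact le_rfl
    | roleA P a b => exact le_self_add

variable {V E γ}

lemma colouringModel_monoEdgeMult_ne_zero (hγ : ∀ p ∈ E, γ p.1 ≠ γ p.2) {m : ℕ × ℕ × ℕ}
    (hm : monoEdgeMult (colouringModel V E γ) m ≠ 0) : m = (0, 0, 1) := by
  obtain ⟨x, y, z⟩ := m
  simp only [monoEdgeMult, mul_ne_zero_iff] at hm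
  obtain ⟨⟨hxy, hxz⟩, hyz⟩ := hm
  rw [colouringModel_rI_zero_ne_zero] at hxy
  rw [colouringModel_rI_one_ne_zero] at hxz hyz
  rcases hxy with ⟨rfl, rfl⟩ | ⟨⟨a, b⟩, hab, rfl, rfl⟩
  · rcases hxz with ⟨-, rfl⟩ | ⟨w, -, hw, -⟩
    · rfl
    · omega
  · rcases hxz with ⟨ha, -⟩ | ⟨w, -, hwa, rfl⟩
    · omega
    rcases hyz with ⟨hb, -⟩ | ⟨w', -, hwb, hww'⟩
    · omega
    obtain rfl : w = a := by omega
    obtain rfl : w' = b := by omega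
    exact (hγ _ hab (Fin.ext (by dsimp only; omega))).elim

lemma q3_bagAnswer_colouringModel_le (hγ : ∀ p ∈ E, γ p.1 ≠ γ p.2) :
    q3.bagAnswer (colouringModel V E γ) [] ≤ ((3 * V.card + 1 : ℕ) : ℕ∞) := by
  calc q3.bagAnswer (colouringModel V E γ) []
      ≤ (∑ m ∈ ({(0, 0, 1)} : Finset (ℕ × ℕ × ℕ)), monoEdgeMult (colouringModel V E γ) m) *
          ∑ w ∈ ({1, 2, 3} : Finset ℕ), (colouringModel V E γ).cI 1 w := by
        refine q3_bagAnswer_le_sum_mul_sum _ _ _ (fun m hm => ?_) (fun (w : ℕ) hw => ?_)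
        · exact Finset.mem_singleton.mpr (colouringModel_monoEdgeMult_ne_zero hγ hm)
        · rw [colouringModel_cI, count_aCol_aboxG] at hw
          show w ∈ ({1, 2, 3} : Finset ℕ)
          simp only [Finset.mem_insert, Finset.mem_singleton]
          split_ifs at hw with h1 h23
          · exact Or.inl h1
          · exact Or.inr h23
          · simp at hw
    _ = ((V.card + 1 : ℕ) : ℕ∞) + (V.card + V.card) := by
        simp [monoEdgeMult, colouringModel_rI_zero, colouringModel_rI_one, colouringModel_cI,
          count_edge_aboxG, count_aCol_aboxG]
    _ = ((3 * V.card + 1 : ℕ) : ℕ∞) := by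
        push_cast
        ring

end ColouringModel

theorem statement_3_general (V : Finset ℕ) (E : Finset (ℕ × ℕ))
    (hVE : ∀ p ∈ E, p.1 ∈ V ∧ p.2 ∈ V) :
    (¬ ∃ γ : ℕ → Fin 3, ∀ p ∈ E, γ p.1 ≠ γ p.2) ↔
      ((3 * V.card + 2 : ℕ) : ℕ∞) ≤ bagCertain ⟨tbox3, aboxG V E⟩ q3 [] := by
  refine ⟨fun h3 => le_bagCertain fun I hM => le_q3_bagAnswer_of_not_colourable hVE h3 hM, ?_⟩
  rintro hle ⟨γ, hγ⟩
  have h := hle.trans <| (bagCertain_le_bagAnswer (colouringModel_isModel V E γ) q3 []).trans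
    (q3_bagAnswer_colouringModel_le hγ)
  norm_cast at h
  omega

/-- For every finite undirected connected graph `G = (V,E)`
without self-loops: `G` is not 3-colourable iff the bag certain answer
`q^{⟨T,A_G⟩}(⟨⟩)` is at least `3·|V| + 2`. -/
theorem statement_3 (V : Finset ℕ) (E : Finset (ℕ × ℕ))
    (hVE : ∀ p ∈ E, p.1 ∈ V ∧ p.2 ∈ V)
    (hsym : ∀ p : ℕ × ℕ, p ∈ E ↔ (p.2, p.1) ∈ E)
    (hirr : ∀ v : ℕ, (v, v) ∉ E)
    (hconn : ∀ u ∈ V, ∀ v ∈ V, Relation.ReflTransGen (fun x y => (x, y) ∈ E) u v) :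
    (¬ ∃ γ : ℕ → Fin 3, ∀ p ∈ E, γ p.1 ≠ γ p.2) ↔
      ((3 * V.card + 2 : ℕ) : ℕ∞) ≤ bagCertain ⟨tbox3, aboxG V E⟩ q3 [] :=
  statement_3_general V E hVE
end
end
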